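/- Under conditions (A.1) and (A.3), the spectral radius of the transfer operator L_M acting on the Banach space F^k_b(X) of bounded d_θ-Lipschitz-type functions equals its spectral radius acting on the Banach space C_b(X) of bounded continuous functions. -/

import Mathlib

open Filter MeasureTheory Topology
open scoped ENNReal NNReal BigOperators

namespace TMS

variable {S : Type*}

/-- prepend a symbol to a one-sided sequence -/
def cons (a : S) (ω : ℕ → S) : ℕ → S
  | 0 => a
  | n + 1 => ω n

/-- the shift transformation -/
def shift (ω : ℕ → S) : ℕ → S := fun n => ω (n + 1)

/-- the (one-sided) topological Markov shift with transition matrix `A` -/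
def markovShift (A : S → S → Prop) : Set (ℕ → S) := {ω | ∀ n, A (ω n) (ω (n + 1))}

/-- the cylinder set of a word of length `n`, inside `X` -/
def cylW (X : Set (ℕ → S)) (n : ℕ) (w : Fin n → S) : Set (ℕ → S) :=
  {ω | ω ∈ X ∧ ∀ i : Fin n, ω i = w i}

/-- the cylinder set of a single symbol, inside `X` -/
def cyl1 (X : Set (ℕ → S)) (s : S) : Set (ℕ → S) := {ω | ω ∈ X ∧ ω 0 = s}

/-- Birkhoff sum `S_n φ` -/
noncomputable def birkhoff (φ : (ℕ → S) → ℝ) (n : ℕ) (ω : ℕ → S) : ℝ :=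
  ∑ i ∈ Finset.range n, φ (shift^[i] ω)

open Classical in
/-- the metric `d_θ` -/
noncomputable def dtheta (θ : ℝ) (ω υ : ℕ → S) : ℝ :=
  if ω = υ then 0 else θ ^ sInf {n | ω n ≠ υ n}

/-- supremum norm over `X` -/
noncomputable def supNorm (X : Set (ℕ → S)) (f : (ℕ → S) → ℝ) : ℝ :=
  sSup ((fun ω => |f ω|) '' X)

/-- `C` is a bound witnessing `[f]_k ≤ C`, i.e. `var_n f ≤ C θ^n` for all `n ≥ k`. -/
def LipBound (X : Set (ℕ → S)) (θ : ℝ) (k : ℕ) (f : (ℕ → S) → ℝ) (C : ℝ) : Prop :=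
  ∀ n, k ≤ n → ∀ ω, ω ∈ X → ∀ υ, υ ∈ X → (∀ i, i < n → ω i = υ i) →
    |f ω - f υ| ≤ C * θ ^ n

/-- the seminorm `[f]_k` -/
noncomputable def lipSemi (X : Set (ℕ → S)) (θ : ℝ) (k : ℕ) (f : (ℕ → S) → ℝ) : ℝ :=
  sInf {C | 0 ≤ C ∧ LipBound X θ k f C}

/-- the norm `‖f‖_k = ‖f‖_∞ + [f]_k` -/
noncomputable def normK (X : Set (ℕ → S)) (θ : ℝ) (k : ℕ) (f : (ℕ → S) → ℝ) : ℝ :=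
  supNorm X f + lipSemi X θ k f

/-- `φ` is summable: `Σ_{s : [s] ≠ ∅} exp (sup_{[s]} φ) < ∞` -/
def SummableOn (X : Set (ℕ → S)) (φ : (ℕ → S) → ℝ) : Prop :=
  (∀ s : S, BddAbove (φ '' cyl1 X s)) ∧
    Summable (fun s : {s : S // (cyl1 X s).Nonempty} => Real.exp (sSup (φ '' cyl1 X s.1)))

/-- finite irreducibility of a transition matrix -/
def FinitelyIrreducible (A : S → S → Prop) : Prop :=
  ∃ F : Finset (List S), ∀ a b : S, ∃ w ∈ F, List.Chain' A (a :: (w ++ [b]))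

/-- `X` contains a periodic point of the shift -/
def HasPeriodicPoint (X : Set (ℕ → S)) : Prop :=
  ∃ ω, ω ∈ X ∧ ∃ m, 0 < m ∧ shift^[m] ω = ω

/-- the Ruelle transfer operator `L_M` associated to `M` and the potential `φ` -/
noncomputable def transfer (M : S → S → Prop) (φ : (ℕ → S) → ℝ)
    (f : (ℕ → S) → ℝ) : (ℕ → S) → ℝ :=
  fun ω => ∑' a : {a : S // M a (ω 0)}, Real.exp (φ (cons a ω)) * f (cons a ω)

section Top

variable [TopologicalSpace S]

/-- the cone `Λ^k_c` -/
def cone (X : Set (ℕ → S)) (θ : ℝ) (k : ℕ) (c : ℝ) : Set ((ℕ → S) → ℝ) :=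
  {f | ContinuousOn f X ∧ (∀ ω ∈ X, 0 ≤ f ω) ∧
    ∀ ω ∈ X, ∀ υ ∈ X, (∀ i, i < k → ω i = υ i) →
      f ω ≤ Real.exp (c * dtheta θ ω υ) * f υ}

/-- the space `C_b(X)` of bounded continuous functions -/
def Cb (X : Set (ℕ → S)) : Set ((ℕ → S) → ℝ) :=
  {f | ContinuousOn f X ∧ BddAbove ((fun ω => |f ω|) '' X)}

/-- the space `F^k_b(X)` of bounded weak-Lipschitz functions -/
def Fkb (X : Set (ℕ → S)) (θ : ℝ) (k : ℕ) : Set ((ℕ → S) → ℝ) :=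
  {f | f ∈ Cb X ∧ ∃ C, LipBound X θ k f C}

end Top

/-- operator norm of `L` on the space `F` with norm `N` -/
noncomputable def opNorm (N : ((ℕ → S) → ℝ) → ℝ) (F : Set ((ℕ → S) → ℝ))
    (L : ((ℕ → S) → ℝ) → (ℕ → S) → ℝ) : ℝ :=
  sSup {r | ∃ f ∈ F, N f ≤ 1 ∧ r = N (L f)}

/-- spectral radius of `L` on `(F, N)` via the Gelfand formula -/
noncomputable def specRad (N : ((ℕ → S) → ℝ) → ℝ) (F : Set ((ℕ → S) → ℝ))
    (L : ((ℕ → S) → ℝ) → (ℕ → S) → ℝ) : ℝ :=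
  Filter.limsup (fun n : ℕ => (opNorm N F (L^[n])) ^ ((1 : ℝ) / n)) Filter.atTop

/-- the `n`-th partition function `Σ_{w ∈ Sⁿ, [w] ≠ ∅} exp (sup_{[w]} S_n φ)` -/
noncomputable def partition (X : Set (ℕ → S)) (φ : (ℕ → S) → ℝ) (n : ℕ) : ℝ≥0∞ :=
  ∑' w : {w : Fin n → S // (cylW X n w).Nonempty},
    ENNReal.ofReal (Real.exp (sSup (birkhoff φ n '' cylW X n w.1)))

/-- `P` is the topological pressure of `φ` on `X` -/
def IsPressure (X : Set (ℕ → S)) (φ : (ℕ → S) → ℝ) (P : ℝ) : Prop :=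
  Filter.Tendsto (fun n : ℕ => Real.log (partition X φ n).toReal / (n : ℝ))
    Filter.atTop (nhds P)

/-- there is an `M`-path from `a` to `b` (of length at least one) -/
def reaches (M : S → S → Prop) (a b : S) : Prop :=
  ∃ l : List S, List.Chain M a (l ++ [b])

/-- communication relation `a ↔ b` -/
def comm (M : S → S → Prop) (a b : S) : Prop :=
  a = b ∨ (reaches M a b ∧ reaches M b a)

/-- the submatrix of `M` indexed by `T` -/
def restrictM (M : S → S → Prop) (T : Set S) : S → S → Prop :=
  fun a b => M a b ∧ a ∈ T ∧ b ∈ T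

/-- support of a Borel measure -/
def msupport [TopologicalSpace S] [MeasurableSpace S] (ν : Measure (ℕ → S)) :
    Set (ℕ → S) :=
  {ω | ∀ U : Set (ℕ → S), IsOpen U → ω ∈ U → 0 < ν U}

end TMS

/-!
`L_M` is a positive operator, so its `n`-th iterate has norm `‖L_M^n 1‖_∞` on `C_b(X)`.
On `F^k_b(X)` the regularity of `φ` gives bounded distortion of the weights `exp (S_n φ)` along
inverse branches, whence `[L_M^n f]_k ≤ C ‖f‖_k ‖L_M^n 1‖_∞` with `C` independent of `n`.
So `‖L_M^n 1‖_∞ ≤ ‖L_M^n‖_k ≤ C' ‖L_M^n 1‖_∞`, and the `n`-th roots of both operator norms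
have the same `limsup`.
-/

open Filter Topology

theorem limsup_rpow_one_div_eq_of_le_mul {a b : ℕ → ℝ} {c τ : ℝ} (hc : 0 < c) (hτ : 0 ≤ τ)
    (hb : ∀ n, 0 ≤ b n) (hbτ : ∀ n, b n ≤ τ ^ n) (hba : ∀ n, b n ≤ a n)
    (hab : ∀ n, a n ≤ c * b n) :
    limsup (fun n : ℕ => a n ^ ((1 : ℝ) / n)) atTop =
      limsup (fun n : ℕ => b n ^ ((1 : ℝ) / n)) atTop := by
  set u : ℕ → ℝ := fun n => c ^ ((1 : ℝ) / n)
  set v : ℕ → ℝ := fun n => b n ^ ((1 : ℝ) / n)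
  set w : ℕ → ℝ := fun n => a n ^ ((1 : ℝ) / n)
  have hu : Tendsto u atTop (𝓝 1) := by
    simpa only [Real.rpow_zero] using
      tendsto_const_nhds.rpow tendsto_one_div_atTop_nhds_zero_nat (Or.inl hc.ne')
  have hv0 : ∀ n, 0 ≤ v n := fun n => Real.rpow_nonneg (hb n) _
  have hvw : ∀ n, v n ≤ w n := fun n => Real.rpow_le_rpow (hb n) (hba n) (by positivity)
  have hwuv : ∀ n, w n ≤ u n * v n := fun n => by
    simp only [u, v, w, ← Real.mul_rpow hc.le (hb n)]
    exact Real.rpow_le_rpow ((hb n).trans (hba n)) (hab n) (by positivity)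
  have hv_bdd : IsBoundedUnder (· ≤ ·) atTop v := by
    refine isBoundedUnder_of_eventually_le (a := τ) ?_
    filter_upwards [eventually_ne_atTop 0] with n hn
    calc v n ≤ (τ ^ n) ^ ((1 : ℝ) / n) := Real.rpow_le_rpow (hb n) (hbτ n) (by positivity)
      _ = τ := by rw [one_div, Real.pow_rpow_inv_natCast hτ hn]
  have hu0 : ∃ᶠ n in atTop, 0 ≤ u n := (Eventually.of_forall fun n => by positivity).frequently
  have huv_bdd : IsBoundedUnder (· ≤ ·) atTop (u * v) :=
    isBoundedUnder_le_mul_of_nonneg hu0 hu.isBoundedUnder_le (Eventually.of_forall hv0) hv_bdd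
  apply le_antisymm
  · calc limsup w atTop ≤ limsup (u * v) atTop :=
          limsup_le_limsup (Eventually.of_forall hwuv)
            (isCoboundedUnder_le_of_le atTop fun n => (hv0 n).trans (hvw n)) huv_bdd
      _ ≤ limsup u atTop * limsup v atTop :=
          limsup_mul_le hu0 hu.isBoundedUnder_le (Eventually.of_forall hv0) hv_bdd
      _ = limsup v atTop := by rw [hu.limsup_eq, one_mul]
  · exact limsup_le_limsup (Eventually.of_forall hvw) (isCoboundedUnder_le_of_le atTop hv0)
      (huv_bdd.mono_le (Eventually.of_forall hwuv))

theorem abs_tsum_le_tsum_of_abs_le {ι : Type*} {x z : ι → ℝ} (hz : Summable z)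
    (h : ∀ i, |x i| ≤ z i) : |∑' i, x i| ≤ ∑' i, z i :=
  tsum_of_norm_bounded hz.hasSum fun i => (Real.norm_eq_abs _).trans_le (h i)

theorem abs_tsum_sub_tsum_le {ι : Type*} {x y z : ι → ℝ} (hx : Summable x) (hy : Summable y)
    (hz : Summable z) (h : ∀ i, |x i - y i| ≤ z i) : |∑' i, x i - ∑' i, y i| ≤ ∑' i, z i := by
  rw [← hx.tsum_sub hy]
  exact abs_tsum_le_tsum_of_abs_le hz h

namespace Real

theorem sub_one_le_mul_exp (x : ℝ) : exp x - 1 ≤ x * exp x := by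
  have h := mul_le_mul_of_nonneg_right (add_one_le_exp (-x)) (exp_pos x).le
  rw [← exp_add, neg_add_cancel, exp_zero] at h
  linarith

theorem abs_exp_sub_one_le_exp_abs_sub_one (x : ℝ) : |exp x - 1| ≤ exp |x| - 1 := by
  rcases le_total 0 x with hx | hx
  · rw [abs_of_nonneg hx, abs_of_nonneg (sub_nonneg.2 (one_le_exp hx))]
  · rw [abs_of_nonpos hx, abs_of_nonpos (sub_nonpos.2 (exp_le_one_iff.2 hx))]
    linarith [add_one_le_exp x, add_one_le_exp (-x)]

theorem abs_exp_sub_exp_le {u v d : ℝ} (h : |u - v| ≤ d) :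
    |exp u - exp v| ≤ exp v * (exp d - 1) := by
  have hsplit : exp u - exp v = exp v * (exp (u - v) - 1) := by
    rw [mul_sub, ← exp_add, add_sub_cancel, mul_one]
  rw [hsplit, abs_mul, abs_of_pos (exp_pos v)]
  gcongr
  exact (abs_exp_sub_one_le_exp_abs_sub_one _).trans (by gcongr)

theorem abs_exp_mul_sub_exp_mul_le {u v d p q R c G : ℝ} (hd : |u - v| ≤ d)
    (hpq : |p - q| ≤ R * G) (hq : |q| ≤ c * G) :
    |exp u * p - exp v * q| ≤ (exp d * R + c * (exp d - 1)) * (exp v * G) := by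
  have hd0 : 0 ≤ d := (abs_nonneg _).trans hd
  have hu : exp u ≤ exp d * exp v := by
    rw [← exp_add]
    exact exp_le_exp.2 (by linarith [(abs_le.1 hd).2])
  calc |exp u * p - exp v * q| = |exp u * (p - q) + (exp u - exp v) * q| := by ring_nf
    _ ≤ exp u * |p - q| + |exp u - exp v| * |q| := by
        rw [← abs_of_pos (exp_pos u), ← abs_mul, ← abs_mul, abs_of_pos (exp_pos u)]
        exact abs_add_le _ _
    _ ≤ (exp d * exp v) * (R * G) + (exp v * (exp d - 1)) * (c * G) := by
        have hRG : 0 ≤ R * G := (abs_nonneg _).trans hpq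
        have hcG : 0 ≤ c * G := (abs_nonneg _).trans hq
        have hexp := abs_exp_sub_exp_le hd
        gcongr
        exact mul_nonneg (exp_pos v).le (sub_nonneg.2 (one_le_exp hd0))
    _ = (exp d * R + c * (exp d - 1)) * (exp v * G) := by ring

end Real

namespace TMS

variable {S : Type*}

theorem cons_mem_markovShift {A M : S → S → Prop} (hMA : ∀ a b, M a b → A a b) {a : S}
    {ω : ℕ → S} (hω : ω ∈ markovShift A) (ha : M a (ω 0)) : cons a ω ∈ markovShift A
  | 0 => hMA _ _ ha
  | n + 1 => hω n

theorem cons_eq_cons_of_lt_succ {ω υ : ℕ → S} {m : ℕ} (h : ∀ i < m, ω i = υ i) (a : S) :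
    ∀ i < m + 1, cons a ω i = cons a υ i
  | 0, _ => rfl
  | i + 1, hi => h i (by omega)

section Norms

variable {X : Set (ℕ → S)} {θ : ℝ} {k : ℕ} {f : (ℕ → S) → ℝ}

theorem le_supNorm (hf : BddAbove ((fun ω => |f ω|) '' X)) {ω : ℕ → S} (hω : ω ∈ X) :
    |f ω| ≤ supNorm X f :=
  le_csSup hf ⟨ω, hω, rfl⟩

theorem supNorm_nonneg : 0 ≤ supNorm X f :=
  Real.sSup_nonneg <| by rintro _ ⟨ω, _, rfl⟩; exact abs_nonneg _

theorem supNorm_le {c : ℝ} (hc : 0 ≤ c) (h : ∀ ω ∈ X, |f ω| ≤ c) : supNorm X f ≤ c :=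
  Real.sSup_le (by rintro _ ⟨ω, hω, rfl⟩; exact h ω hω) hc

theorem LipBound.mono {C C' : ℝ} (hθ : 0 ≤ θ) (h : LipBound X θ k f C) (hCC' : C ≤ C') :
    LipBound X θ k f C' := fun n hn ω hω υ hυ hωυ =>
  (h n hn ω hω υ hυ hωυ).trans (mul_le_mul_of_nonneg_right hCC' (pow_nonneg hθ n))

theorem lipSemi_nonneg : 0 ≤ lipSemi X θ k f :=
  Real.sInf_nonneg fun _ hC => hC.1

theorem lipSemi_le {C : ℝ} (hC0 : 0 ≤ C) (hC : LipBound X θ k f C) : lipSemi X θ k f ≤ C :=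
  csInf_le ⟨0, fun _ hC => hC.1⟩ ⟨hC0, hC⟩

theorem LipBound.lipBound_lipSemi {C : ℝ} (hθ : 0 < θ) (h : LipBound X θ k f C) :
    LipBound X θ k f (lipSemi X θ k f) := by
  have hne : {C | 0 ≤ C ∧ LipBound X θ k f C}.Nonempty :=
    ⟨max C 0, le_max_right _ _, h.mono hθ.le (le_max_left _ _)⟩
  intro n hn ω hω υ hυ hωυ
  rw [lipSemi, ← div_le_iff₀ (pow_pos hθ n)]
  exact le_csInf hne fun C hC => (div_le_iff₀ (pow_pos hθ n)).2 (hC.2 n hn ω hω υ hυ hωυ)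

theorem normK_one_le : normK X θ k (fun _ => 1) ≤ 1 := by
  have hsup : supNorm X (fun _ => (1 : ℝ)) ≤ 1 := supNorm_le zero_le_one fun _ _ => by simp
  have hlip : lipSemi X θ k (fun _ => (1 : ℝ)) ≤ 0 := lipSemi_le le_rfl fun _ _ _ _ _ _ _ => by simp
  rw [normK]
  linarith

theorem one_mem_Cb [TopologicalSpace S] : (fun _ => (1 : ℝ)) ∈ Cb X :=
  ⟨continuousOn_const, ⟨1, by rintro _ ⟨ω, _, rfl⟩; simp⟩⟩

theorem one_mem_Fkb [TopologicalSpace S] : (fun _ => (1 : ℝ)) ∈ Fkb X θ k :=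
  ⟨one_mem_Cb, 0, fun _ _ _ _ _ _ _ => by simp⟩

end Norms

section OpNorm

variable {N : ((ℕ → S) → ℝ) → ℝ} {F : Set ((ℕ → S) → ℝ)} {L : ((ℕ → S) → ℝ) → (ℕ → S) → ℝ}
  {u : ℝ}

theorem opNorm_le (hu : 0 ≤ u) (h : ∀ f ∈ F, N f ≤ 1 → N (L f) ≤ u) : opNorm N F L ≤ u :=
  Real.sSup_le (by rintro _ ⟨f, hf, hf1, rfl⟩; exact h f hf hf1) hu

theorem le_opNorm (h : ∀ f ∈ F, N f ≤ 1 → N (L f) ≤ u) {f : (ℕ → S) → ℝ} (hf : f ∈ F)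
    (hf1 : N f ≤ 1) : N (L f) ≤ opNorm N F L :=
  le_csSup ⟨u, by rintro _ ⟨g, hg, hg1, rfl⟩; exact h g hg hg1⟩ ⟨f, hf, hf1, rfl⟩

end OpNorm

variable {A M : S → S → Prop} {φ : (ℕ → S) → ℝ}

noncomputable def expSupSum (A : S → S → Prop) (φ : (ℕ → S) → ℝ) : ℝ :=
  ∑' s : {s : S // (cyl1 (markovShift A) s).Nonempty},
    Real.exp (sSup (φ '' cyl1 (markovShift A) s.1))

theorem expSupSum_nonneg : 0 ≤ expSupSum A φ :=
  tsum_nonneg fun _ => (Real.exp_pos _).le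

theorem transfer_apply_of_eq {h : (ℕ → S) → ℝ} {ω : ℕ → S} {s : S} (hs : ω 0 = s) :
    transfer M φ h ω = ∑' a : {a : S // M a s}, Real.exp (φ (cons a.1 ω)) * h (cons a.1 ω) := by
  subst hs
  rfl

section Summability

variable {ω : ℕ → S} {s : S}

theorem exists_injective_exp_cons_le (hMA : ∀ a b, M a b → A a b)
    (hφ : SummableOn (markovShift A) φ) (hω : ω ∈ markovShift A) (hs : ω 0 = s) :
    ∃ e : {a : S // M a s} → {s : S // (cyl1 (markovShift A) s).Nonempty},
      Function.Injective e ∧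
        ∀ a, Real.exp (φ (cons a.1 ω)) ≤ Real.exp (sSup (φ '' cyl1 (markovShift A) (e a).1)) := by
  subst hs
  refine ⟨fun a => ⟨a.1, cons a.1 ω, cons_mem_markovShift hMA hω a.2, rfl⟩,
    fun a b hab => Subtype.ext (congrArg Subtype.val hab :), fun a => ?_⟩
  exact Real.exp_le_exp.2 (le_csSup (hφ.1 a.1) ⟨_, ⟨cons_mem_markovShift hMA hω a.2, rfl⟩, rfl⟩)

theorem summable_exp_cons (hMA : ∀ a b, M a b → A a b) (hφ : SummableOn (markovShift A) φ)
    (hω : ω ∈ markovShift A) (hs : ω 0 = s) :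
    Summable fun a : {a : S // M a s} => Real.exp (φ (cons a.1 ω)) := by
  obtain ⟨e, he, hle⟩ := exists_injective_exp_cons_le hMA hφ hω hs
  exact Summable.of_nonneg_of_le (fun _ => (Real.exp_pos _).le) hle (hφ.2.comp_injective he)

theorem tsum_exp_cons_le (hMA : ∀ a b, M a b → A a b) (hφ : SummableOn (markovShift A) φ)
    (hω : ω ∈ markovShift A) (hs : ω 0 = s) :
    ∑' a : {a : S // M a s}, Real.exp (φ (cons a.1 ω)) ≤ expSupSum A φ := by
  obtain ⟨e, he, hle⟩ := exists_injective_exp_cons_le hMA hφ hω hs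
  exact (summable_exp_cons hMA hφ hω hs).tsum_le_tsum_of_inj e he
    (fun _ _ => (Real.exp_pos _).le) hle hφ.2

theorem summable_exp_cons_mul (hMA : ∀ a b, M a b → A a b) (hφ : SummableOn (markovShift A) φ)
    (hω : ω ∈ markovShift A) (hs : ω 0 = s) {h : (ℕ → S) → ℝ} {c : ℝ}
    (hh : ∀ υ ∈ markovShift A, |h υ| ≤ c) :
    Summable fun a : {a : S // M a s} => Real.exp (φ (cons a.1 ω)) * h (cons a.1 ω) := by
  refine Summable.of_norm_bounded ((summable_exp_cons hMA hφ hω hs).mul_right c) fun a => ?_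
  have ha : M a.1 (ω 0) := hs ▸ a.2
  rw [Real.norm_eq_abs, abs_mul, abs_of_pos (Real.exp_pos _)]
  exact mul_le_mul_of_nonneg_left (hh _ (cons_mem_markovShift hMA hω ha)) (Real.exp_pos _).le

end Summability

section Positivity

variable {f g : (ℕ → S) → ℝ} {c : ℝ} {ω : ℕ → S}

theorem abs_transfer_le_transfer (hMA : ∀ a b, M a b → A a b) (hφ : SummableOn (markovShift A) φ)
    (hω : ω ∈ markovShift A) (hfg : ∀ υ ∈ markovShift A, |f υ| ≤ g υ)
    (hg : ∀ υ ∈ markovShift A, |g υ| ≤ c) : |transfer M φ f ω| ≤ transfer M φ g ω := by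
  rw [transfer_apply_of_eq rfl, transfer_apply_of_eq rfl]
  refine abs_tsum_le_tsum_of_abs_le (summable_exp_cons_mul hMA hφ hω rfl hg) fun a => ?_
  rw [abs_mul, abs_of_pos (Real.exp_pos _)]
  exact mul_le_mul_of_nonneg_left (hfg _ (cons_mem_markovShift hMA hω a.2)) (Real.exp_pos _).le

theorem abs_transfer_le (hMA : ∀ a b, M a b → A a b) (hφ : SummableOn (markovShift A) φ)
    (hω : ω ∈ markovShift A) (hg : ∀ υ ∈ markovShift A, |g υ| ≤ c) :
    |transfer M φ g ω| ≤ c * expSupSum A φ := by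
  have hc : 0 ≤ c := (abs_nonneg _).trans (hg ω hω)
  rw [transfer_apply_of_eq rfl]
  calc _ ≤ ∑' a : {a : S // M a (ω 0)}, c * Real.exp (φ (cons a.1 ω)) := by
        refine abs_tsum_le_tsum_of_abs_le ((summable_exp_cons hMA hφ hω rfl).mul_left c)
          fun a => ?_
        rw [abs_mul, abs_of_pos (Real.exp_pos _), mul_comm c]
        exact mul_le_mul_of_nonneg_left (hg _ (cons_mem_markovShift hMA hω a.2))
          (Real.exp_pos _).le
    _ = c * ∑' a : {a : S // M a (ω 0)}, Real.exp (φ (cons a.1 ω)) := tsum_mul_left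
    _ ≤ c * expSupSum A φ := mul_le_mul_of_nonneg_left (tsum_exp_cons_le hMA hφ hω rfl) hc

theorem abs_iterate_transfer_le_mul_pow (hMA : ∀ a b, M a b → A a b)
    (hφ : SummableOn (markovShift A) φ) (n : ℕ) (hf : ∀ υ ∈ markovShift A, |f υ| ≤ c)
    (hω : ω ∈ markovShift A) : |(transfer M φ)^[n] f ω| ≤ c * expSupSum A φ ^ n := by
  induction n generalizing f c with
  | zero => simpa using hf ω hω
  | succ n ih =>
    rw [Function.iterate_succ_apply, pow_succ', ← mul_assoc]
    exact ih (fun υ hυ => abs_transfer_le hMA hφ hυ hf)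

theorem abs_iterate_transfer_le_iterate_transfer (hMA : ∀ a b, M a b → A a b)
    (hφ : SummableOn (markovShift A) φ) (n : ℕ) (hfg : ∀ υ ∈ markovShift A, |f υ| ≤ g υ)
    (hg : ∀ υ ∈ markovShift A, |g υ| ≤ c) (hω : ω ∈ markovShift A) :
    |(transfer M φ)^[n] f ω| ≤ (transfer M φ)^[n] g ω := by
  induction n generalizing f g c with
  | zero => exact hfg ω hω
  | succ n ih =>
    rw [Function.iterate_succ_apply, Function.iterate_succ_apply]
    exact ih (fun υ hυ => abs_transfer_le_transfer hMA hφ hυ hfg hg)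
      (fun υ hυ => abs_transfer_le hMA hφ hυ hg)

theorem transfer_const_mul (c : ℝ) (h : (ℕ → S) → ℝ) :
    transfer M φ (fun υ => c * h υ) = fun ω => c * transfer M φ h ω := by
  funext ω
  simp only [transfer, ← tsum_mul_left, mul_left_comm]

theorem iterate_transfer_const_mul (n : ℕ) (c : ℝ) (h : (ℕ → S) → ℝ) :
    (transfer M φ)^[n] (fun υ => c * h υ) = fun ω => c * (transfer M φ)^[n] h ω := by
  induction n with
  | zero => rfl
  | succ n ih => rw [Function.iterate_succ_apply', Function.iterate_succ_apply', ih,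
      transfer_const_mul]

theorem abs_iterate_transfer_le_mul_iterate_transfer_one (hMA : ∀ a b, M a b → A a b)
    (hφ : SummableOn (markovShift A) φ) (n : ℕ) (hf : ∀ υ ∈ markovShift A, |f υ| ≤ c)
    (hω : ω ∈ markovShift A) :
    |(transfer M φ)^[n] f ω| ≤ c * (transfer M φ)^[n] (fun _ => 1) ω := by
  have hc : 0 ≤ c := (abs_nonneg _).trans (hf ω hω)
  have h := abs_iterate_transfer_le_iterate_transfer hMA hφ n (g := fun _ => c * 1) (c := c)
    (by simpa using hf) (fun _ _ => by simp [abs_of_nonneg hc]) hω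
  rwa [iterate_transfer_const_mul] at h

theorem iterate_transfer_one_nonneg (hMA : ∀ a b, M a b → A a b)
    (hφ : SummableOn (markovShift A) φ) (n : ℕ) (hω : ω ∈ markovShift A) :
    0 ≤ (transfer M φ)^[n] (fun _ => 1) ω := by
  have h := abs_iterate_transfer_le_mul_iterate_transfer_one hMA hφ n (f := fun _ => 1) (c := 1)
    (fun _ _ => abs_one.le) hω
  rw [one_mul] at h
  exact (abs_nonneg _).trans h

theorem bddAbove_abs_iterate_transfer (hMA : ∀ a b, M a b → A a b)
    (hφ : SummableOn (markovShift A) φ) (n : ℕ) (hf : ∀ υ ∈ markovShift A, |f υ| ≤ c) :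
    BddAbove ((fun ω => |(transfer M φ)^[n] f ω|) '' markovShift A) :=
  ⟨c * expSupSum A φ ^ n, by
    rintro _ ⟨ω, hω, rfl⟩
    exact abs_iterate_transfer_le_mul_pow hMA hφ n hf hω⟩

theorem iterate_transfer_one_le_supNorm (hMA : ∀ a b, M a b → A a b)
    (hφ : SummableOn (markovShift A) φ) (n : ℕ) (hω : ω ∈ markovShift A) :
    (transfer M φ)^[n] (fun _ => 1) ω ≤ supNorm (markovShift A) ((transfer M φ)^[n] fun _ => 1) :=
  (le_abs_self _).trans
    (le_supNorm (bddAbove_abs_iterate_transfer hMA hφ n fun _ _ => abs_one.le) hω)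

theorem supNorm_iterate_transfer_one_le (hMA : ∀ a b, M a b → A a b)
    (hφ : SummableOn (markovShift A) φ) (n : ℕ) :
    supNorm (markovShift A) ((transfer M φ)^[n] fun _ => 1) ≤ expSupSum A φ ^ n :=
  supNorm_le (pow_nonneg expSupSum_nonneg n) fun _ hω => by
    simpa using abs_iterate_transfer_le_mul_pow hMA hφ n (c := 1) (fun _ _ => abs_one.le) hω

end Positivity

section Distortion

variable {θ B : ℝ}

/-- If `[φ]_{k+1} ≤ B`, then for any word `w` of length `n` and `ω, υ` agreeing on their first
`m ≥ k` symbols, `exp (S_n φ (wω) - S_n φ (wυ)) ≤ distortion θ B m n`. -/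
noncomputable def distortion (θ B : ℝ) (m n : ℕ) : ℝ :=
  Real.exp (B * ∑ j ∈ Finset.range n, θ ^ (m + 1 + j))

theorem distortion_zero (m : ℕ) : distortion θ B m 0 = 1 := by
  simp [distortion]

theorem distortion_succ (m n : ℕ) :
    distortion θ B m (n + 1) = Real.exp (B * θ ^ (m + 1)) * distortion θ B (m + 1) n := by
  rw [distortion, distortion, ← Real.exp_add, Finset.sum_range_succ']
  ring_nf

theorem mul_sum_pow_le (hB : 0 ≤ B) (hθ0 : 0 ≤ θ) (hθ1 : θ < 1) (m n : ℕ) :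
    B * ∑ j ∈ Finset.range n, θ ^ (m + 1 + j) ≤ θ ^ m * (B * θ / (1 - θ)) := by
  have h := geom_sum_Ico_le_of_lt_one (m := m + 1) (n := m + 1 + n) hθ0 hθ1
  rw [Finset.sum_Ico_eq_sum_range, Nat.add_sub_cancel_left] at h
  calc B * ∑ j ∈ Finset.range n, θ ^ (m + 1 + j) ≤ B * (θ ^ (m + 1) / (1 - θ)) := by gcongr
    _ = θ ^ m * (B * θ / (1 - θ)) := by ring

theorem distortion_le (hB : 0 ≤ B) (hθ0 : 0 ≤ θ) (hθ1 : θ < 1) (m n : ℕ) :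
    distortion θ B m n ≤ Real.exp (B * θ / (1 - θ)) := by
  refine Real.exp_le_exp.2 ((mul_sum_pow_le hB hθ0 hθ1 m n).trans ?_)
  exact mul_le_of_le_one_left (by positivity) (pow_le_one₀ hθ0 hθ1.le)

theorem distortion_sub_one_le (hB : 0 ≤ B) (hθ0 : 0 ≤ θ) (hθ1 : θ < 1) (m n : ℕ) :
    distortion θ B m n - 1 ≤ θ ^ m * (B * θ / (1 - θ)) * Real.exp (B * θ / (1 - θ)) := by
  calc distortion θ B m n - 1
      ≤ (B * ∑ j ∈ Finset.range n, θ ^ (m + 1 + j)) * distortion θ B m n :=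
        Real.sub_one_le_mul_exp _
    _ ≤ θ ^ m * (B * θ / (1 - θ)) * Real.exp (B * θ / (1 - θ)) :=
        mul_le_mul (mul_sum_pow_le hB hθ0 hθ1 m n) (distortion_le hB hθ0 hθ1 m n)
          (Real.exp_pos _).le (by positivity)

variable {k : ℕ} {f : (ℕ → S) → ℝ} {K c : ℝ}

theorem abs_iterate_transfer_sub_le (hMA : ∀ a b, M a b → A a b)
    (hφ : SummableOn (markovShift A) φ) (hk : 1 ≤ k)
    (hφB : LipBound (markovShift A) θ (k + 1) φ B) (hfK : LipBound (markovShift A) θ k f K)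
    (hf : ∀ υ ∈ markovShift A, |f υ| ≤ c) (n : ℕ) {m : ℕ} (hm : k ≤ m) {ω υ : ℕ → S}
    (hω : ω ∈ markovShift A) (hυ : υ ∈ markovShift A) (hωυ : ∀ i < m, ω i = υ i) :
    |(transfer M φ)^[n] f ω - (transfer M φ)^[n] f υ| ≤
      (K * θ ^ (m + n) * distortion θ B m n + c * (distortion θ B m n - 1)) *
        (transfer M φ)^[n] (fun _ => 1) υ := by
  induction n generalizing m ω υ with
  | zero => simpa [distortion_zero] using hfK m hm ω hω υ hυ hωυ
  | succ n ih =>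
    have h0 : υ 0 = ω 0 := (hωυ 0 (by omega)).symm
    have hfn : ∀ ρ ∈ markovShift A, |(transfer M φ)^[n] f ρ| ≤ c * expSupSum A φ ^ n :=
      fun ρ hρ => abs_iterate_transfer_le_mul_pow hMA hφ n hf hρ
    have hone : ∀ ρ ∈ markovShift A, |(transfer M φ)^[n] (fun _ => 1) ρ| ≤ 1 * expSupSum A φ ^ n :=
      fun ρ hρ => abs_iterate_transfer_le_mul_pow hMA hφ n (fun _ _ => abs_one.le) hρ
    simp only [Function.iterate_succ_apply']
    rw [transfer_apply_of_eq rfl, transfer_apply_of_eq h0, transfer_apply_of_eq h0,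
      ← tsum_mul_left]
    refine abs_tsum_sub_tsum_le (summable_exp_cons_mul hMA hφ hω rfl hfn)
      (summable_exp_cons_mul hMA hφ hυ h0 hfn)
      ((summable_exp_cons_mul hMA hφ hυ h0 hone).mul_left _) fun a => ?_
    have hp : cons a.1 ω ∈ markovShift A := cons_mem_markovShift hMA hω a.2
    have hq : cons a.1 υ ∈ markovShift A := cons_mem_markovShift hMA hυ (by rw [h0]; exact a.2)
    have hpq := cons_eq_cons_of_lt_succ hωυ a.1
    calc _ ≤ (Real.exp (B * θ ^ (m + 1)) * (K * θ ^ (m + 1 + n) * distortion θ B (m + 1) n +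
            c * (distortion θ B (m + 1) n - 1)) + c * (Real.exp (B * θ ^ (m + 1)) - 1)) *
          (Real.exp (φ (cons a.1 υ)) * (transfer M φ)^[n] (fun _ => 1) (cons a.1 υ)) :=
        Real.abs_exp_mul_sub_exp_mul_le (hφB (m + 1) (by omega) _ hp _ hq hpq)
          (ih (by omega) hp hq hpq)
          (abs_iterate_transfer_le_mul_iterate_transfer_one hMA hφ n hf hq)
      _ = _ := by
        rw [distortion_succ, show m + (n + 1) = m + 1 + n by omega]
        ring

end Distortion

variable {θ B : ℝ} {k : ℕ}

theorem lipBound_iterate_transfer (hMA : ∀ a b, M a b → A a b)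
    (hφ : SummableOn (markovShift A) φ) (hθ0 : 0 ≤ θ) (hθ1 : θ < 1) (hk : 1 ≤ k) (hB : 0 ≤ B)
    (hφB : LipBound (markovShift A) θ (k + 1) φ B) {f : (ℕ → S) → ℝ} {K c : ℝ} (hK : 0 ≤ K)
    (hfK : LipBound (markovShift A) θ k f K) (hf : ∀ υ ∈ markovShift A, |f υ| ≤ c) (n : ℕ) :
    LipBound (markovShift A) θ k ((transfer M φ)^[n] f)
      ((K * θ ^ n + c * (B * θ / (1 - θ))) * Real.exp (B * θ / (1 - θ)) *
        supNorm (markovShift A) ((transfer M φ)^[n] fun _ => 1)) := by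
  intro m hm ω hω υ hυ hωυ
  have hc : 0 ≤ c := (abs_nonneg _).trans (hf ω hω)
  have hQ : 0 ≤ (K * θ ^ n + c * (B * θ / (1 - θ))) * Real.exp (B * θ / (1 - θ)) * θ ^ m := by
    positivity
  have hD := distortion_le hB hθ0 hθ1 m n
  have hD1 := distortion_sub_one_le hB hθ0 hθ1 m n
  calc _ ≤ (K * θ ^ (m + n) * distortion θ B m n + c * (distortion θ B m n - 1)) *
        (transfer M φ)^[n] (fun _ => 1) υ :=
        abs_iterate_transfer_sub_le hMA hφ hk hφB hfK hf n hm hω hυ hωυ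
    _ ≤ ((K * θ ^ n + c * (B * θ / (1 - θ))) * Real.exp (B * θ / (1 - θ)) * θ ^ m) *
        (transfer M φ)^[n] (fun _ => 1) υ := by
        refine mul_le_mul_of_nonneg_right ?_ (iterate_transfer_one_nonneg hMA hφ n hυ)
        calc _ ≤ K * θ ^ (m + n) * Real.exp (B * θ / (1 - θ)) +
              c * (θ ^ m * (B * θ / (1 - θ)) * Real.exp (B * θ / (1 - θ))) := by gcongr
          _ = _ := by ring
    _ ≤ ((K * θ ^ n + c * (B * θ / (1 - θ))) * Real.exp (B * θ / (1 - θ)) * θ ^ m) *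
        supNorm (markovShift A) ((transfer M φ)^[n] fun _ => 1) :=
        mul_le_mul_of_nonneg_left (iterate_transfer_one_le_supNorm hMA hφ n hυ) hQ
    _ = _ := by ring

variable [TopologicalSpace S]

theorem normK_iterate_transfer_le (hMA : ∀ a b, M a b → A a b)
    (hφ : SummableOn (markovShift A) φ) (hθ0 : 0 < θ) (hθ1 : θ < 1) (hk : 1 ≤ k) (hB : 0 ≤ B)
    (hφB : LipBound (markovShift A) θ (k + 1) φ B) (n : ℕ) {f : (ℕ → S) → ℝ}
    (hf : f ∈ Fkb (markovShift A) θ k) (hf1 : normK (markovShift A) θ k f ≤ 1) :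
    normK (markovShift A) θ k ((transfer M φ)^[n] f) ≤
      (1 + Real.exp (B * θ / (1 - θ)) + B * θ / (1 - θ) * Real.exp (B * θ / (1 - θ))) *
        supNorm (markovShift A) ((transfer M φ)^[n] fun _ => 1) := by
  obtain ⟨⟨-, hf_bdd⟩, C, hfC⟩ := hf
  set c := supNorm (markovShift A) f
  set K := lipSemi (markovShift A) θ k f
  set s := supNorm (markovShift A) ((transfer M φ)^[n] fun _ => 1)
  set w := B * θ / (1 - θ)
  have hc : 0 ≤ c := supNorm_nonneg
  have hK : 0 ≤ K := lipSemi_nonneg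
  have hs : 0 ≤ s := supNorm_nonneg
  have hw : 0 ≤ w := div_nonneg (mul_nonneg hB hθ0.le) (sub_nonneg.2 hθ1.le)
  have hcK : c + K ≤ 1 := hf1
  have hfc : ∀ υ ∈ markovShift A, |f υ| ≤ c := fun υ hυ => le_supNorm hf_bdd hυ
  have hsup : supNorm (markovShift A) ((transfer M φ)^[n] f) ≤ c * s :=
    supNorm_le (mul_nonneg hc hs) fun ω hω =>
      (abs_iterate_transfer_le_mul_iterate_transfer_one hMA hφ n hfc hω).trans
        (mul_le_mul_of_nonneg_left (iterate_transfer_one_le_supNorm hMA hφ n hω) hc)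
  have hlip : lipSemi (markovShift A) θ k ((transfer M φ)^[n] f) ≤
      (K * θ ^ n + c * w) * Real.exp w * s :=
    lipSemi_le (by positivity) (lipBound_iterate_transfer hMA hφ hθ0.le hθ1 hk hB hφB hK
      (hfC.lipBound_lipSemi hθ0) hfc n)
  have hKθ : K * θ ^ n ≤ 1 :=
    mul_le_one₀ (by linarith) (pow_nonneg hθ0.le n)
      (pow_le_one₀ hθ0.le hθ1.le)
  have hcoef : c + (K * θ ^ n + c * w) * Real.exp w ≤ 1 + Real.exp w + w * Real.exp w := by
    have hc1 : c ≤ 1 := by linarith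
    have hE := (Real.exp_pos w).le
    nlinarith [mul_le_mul_of_nonneg_right hc1 (mul_nonneg hw hE)]
  calc normK (markovShift A) θ k ((transfer M φ)^[n] f) ≤ c * s + (K * θ ^ n + c * w) *
        Real.exp w * s := add_le_add hsup hlip
    _ = (c + (K * θ ^ n + c * w) * Real.exp w) * s := by ring
    _ ≤ _ := mul_le_mul_of_nonneg_right hcoef hs

theorem opNorm_Fkb_iterate_transfer_le (hMA : ∀ a b, M a b → A a b)
    (hφ : SummableOn (markovShift A) φ) (hθ0 : 0 < θ) (hθ1 : θ < 1) (hk : 1 ≤ k) (hB : 0 ≤ B)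
    (hφB : LipBound (markovShift A) θ (k + 1) φ B) (n : ℕ) :
    opNorm (normK (markovShift A) θ k) (Fkb (markovShift A) θ k) ((transfer M φ)^[n]) ≤
      (1 + Real.exp (B * θ / (1 - θ)) + B * θ / (1 - θ) * Real.exp (B * θ / (1 - θ))) *
        supNorm (markovShift A) ((transfer M φ)^[n] fun _ => 1) :=
  opNorm_le (mul_nonneg (by positivity) supNorm_nonneg)
    fun _ hf hf1 => normK_iterate_transfer_le hMA hφ hθ0 hθ1 hk hB hφB n hf hf1

theorem supNorm_iterate_transfer_one_le_opNorm_Fkb (hMA : ∀ a b, M a b → A a b)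
    (hφ : SummableOn (markovShift A) φ) (hθ0 : 0 < θ) (hθ1 : θ < 1) (hk : 1 ≤ k) (hB : 0 ≤ B)
    (hφB : LipBound (markovShift A) θ (k + 1) φ B) (n : ℕ) :
    supNorm (markovShift A) ((transfer M φ)^[n] fun _ => 1) ≤
      opNorm (normK (markovShift A) θ k) (Fkb (markovShift A) θ k) ((transfer M φ)^[n]) :=
  calc _ ≤ normK (markovShift A) θ k ((transfer M φ)^[n] fun _ => 1) :=
        le_add_of_nonneg_right lipSemi_nonneg
    _ ≤ _ := le_opNorm (fun _ hf hf1 => normK_iterate_transfer_le hMA hφ hθ0 hθ1 hk hB hφB n hf hf1)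
        one_mem_Fkb normK_one_le

theorem opNorm_Cb_iterate_transfer (hMA : ∀ a b, M a b → A a b)
    (hφ : SummableOn (markovShift A) φ) (n : ℕ) :
    opNorm (supNorm (markovShift A)) (Cb (markovShift A)) ((transfer M φ)^[n]) =
      supNorm (markovShift A) ((transfer M φ)^[n] fun _ => 1) := by
  have hbound : ∀ f ∈ Cb (markovShift A), supNorm (markovShift A) f ≤ 1 →
      supNorm (markovShift A) ((transfer M φ)^[n] f) ≤
        supNorm (markovShift A) ((transfer M φ)^[n] fun _ => 1) := fun f hf hf1 =>
    supNorm_le supNorm_nonneg fun ω hω =>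
      ((abs_iterate_transfer_le_mul_iterate_transfer_one hMA hφ n
        (fun υ hυ => (le_supNorm hf.2 hυ).trans hf1) hω).trans_eq (one_mul _)).trans
          (iterate_transfer_one_le_supNorm hMA hφ n hω)
  exact le_antisymm (opNorm_le supNorm_nonneg hbound)
    (le_opNorm hbound one_mem_Cb (supNorm_le zero_le_one fun _ _ => abs_one.le))

end TMS

theorem stmt4_general {S : Type*} [TopologicalSpace S]
    (A M : S → S → Prop) (hMA : ∀ a b, M a b → A a b)
    (θ : ℝ) (hθ0 : 0 < θ) (hθ1 : θ < 1) (k : ℕ) (hk : 1 ≤ k)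
    (φ : (ℕ → S) → ℝ) (hφ : TMS.SummableOn (TMS.markovShift A) φ)
    (hφlip : ∃ C, TMS.LipBound (TMS.markovShift A) θ (k + 1) φ C) :
    TMS.specRad (TMS.normK (TMS.markovShift A) θ k) (TMS.Fkb (TMS.markovShift A) θ k)
        (TMS.transfer M φ) =
      TMS.specRad (TMS.supNorm (TMS.markovShift A)) (TMS.Cb (TMS.markovShift A))
        (TMS.transfer M φ) := by
  obtain ⟨C, hC⟩ := hφlip
  have hB : TMS.LipBound (TMS.markovShift A) θ (k + 1) φ (max C 0) :=
    hC.mono hθ0.le (le_max_left _ _)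
  simp only [TMS.specRad, TMS.opNorm_Cb_iterate_transfer hMA hφ]
  exact limsup_rpow_one_div_eq_of_le_mul (by positivity) TMS.expSupSum_nonneg
    (fun _ => TMS.supNorm_nonneg) (TMS.supNorm_iterate_transfer_one_le hMA hφ)
    (TMS.supNorm_iterate_transfer_one_le_opNorm_Fkb hMA hφ hθ0 hθ1 hk (le_max_right _ _) hB)
    (TMS.opNorm_Fkb_iterate_transfer_le hMA hφ hθ0 hθ1 hk (le_max_right _ _) hB)

/-- under (A.1) and (A.3) the spectral radius of `L_M` on `F^k_b(X)`
equals its spectral radius on `C_b(X)`. -/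
theorem stmt4 {S : Type*} [Countable S] [TopologicalSpace S] [DiscreteTopology S]
    (A M : S → S → Prop) (hMA : ∀ a b, M a b → A a b)
    (hA : TMS.FinitelyIrreducible A)
    (θ : ℝ) (hθ0 : 0 < θ) (hθ1 : θ < 1) (k : ℕ) (hk : 1 ≤ k)
    (φ : (ℕ → S) → ℝ) (hφ : TMS.SummableOn (TMS.markovShift A) φ)
    (hφlip : ∃ C, TMS.LipBound (TMS.markovShift A) θ (k + 1) φ C) :
    TMS.specRad (TMS.normK (TMS.markovShift A) θ k) (TMS.Fkb (TMS.markovShift A) θ k)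
        (TMS.transfer M φ) =
      TMS.specRad (TMS.supNorm (TMS.markovShift A)) (TMS.Cb (TMS.markovShift A))
        (TMS.transfer M φ) :=
  stmt4_general A M hMA θ hθ0 hθ1 k hk φ hφ hφlip
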